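/- arXiv:2110.13488 — 3 statements merged into one kernel-verified Lean document; each statement's English description precedes it below -/
import Mathlib

section
/- Let k be a positive even integer and let s be a vector in F_3^k of full Hamming weight |s| = k. Define ŝ in F_3^k by ŝ_{2i} := s_{2i} + s_{2i+1} and ŝ_{2i+1} := s_{2i} - s_{2i+1} for 0 ≤ i < k/2. Then the Hamming weight of ŝ equals k/2. -/
/-- The vector `ŝ` of the Wavelet paper: `ŝ_{2i} = s_{2i} + s_{2i+1}`,
`ŝ_{2i+1} = s_{2i} - s_{2i+1}` for `0 ≤ i < k/2`, and `ŝ_{k-1} = s_{k-1}` if `k` is odd. -/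
def shat (k : ℕ) (s : Fin k → ZMod 3) : Fin k → ZMod 3 := fun i =>
  if (i : ℕ) % 2 = 0 then
    if h2 : (i : ℕ) + 1 < k then s i + s ⟨(i : ℕ) + 1, h2⟩ else s i
  else
    s ⟨(i : ℕ) - 1, by omega⟩ - s i

lemma pair_sum (a b : ZMod 3) (ha : a ≠ 0) (hb : b ≠ 0) :
    (if a + b ≠ 0 then 1 else 0) + (if a - b ≠ 0 then 1 else 0) = 1 := by
  revert ha hb; revert a b; decide

lemma sum_range_two_mul (m : ℕ) (g : ℕ → ℕ) :
    ∑ n ∈ Finset.range (2 * m), g n = ∑ j ∈ Finset.range m, (g (2 * j) + g (2 * j + 1)) := by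
  induction m with
  | zero => simp
  | succ m ih =>
    have : 2 * (m + 1) = (2 * m) + 1 + 1 := by ring
    rw [this, Finset.sum_range_succ, Finset.sum_range_succ, ih, Finset.sum_range_succ]
    ring

theorem stmt1 (k : ℕ) (hk : 0 < k) (hke : k % 2 = 0) (s : Fin k → ZMod 3)
    (hs : hammingNorm s = k) :
    hammingNorm (shat k s) = k / 2 := by
  classical
  have hsnz : ∀ i, s i ≠ 0 := by
    intro i
    have : Finset.univ.filter (fun j => s j ≠ 0) = Finset.univ := by
      apply Finset.eq_univ_of_card
      simpa [hammingNorm, Fintype.card_fin] using hs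
    have hi : i ∈ Finset.univ.filter (fun j => s j ≠ 0) := by rw [this]; exact Finset.mem_univ i
    exact (Finset.mem_filter.mp hi).2
  set g : ℕ → ℕ := fun n => if hn : n < k then (if shat k s ⟨n, hn⟩ ≠ 0 then 1 else 0) else 0 with hg
  have h1 : hammingNorm (shat k s) = ∑ n ∈ Finset.range k, g n := by
    rw [hammingNorm, Finset.card_filter, ← Fin.sum_univ_eq_sum_range]
    apply Finset.sum_congr rfl
    intro i _
    simp [hg, i.isLt]
  rw [h1]
  have hk2 : k = 2 * (k / 2) := by omega
  rw [hk2, sum_range_two_mul]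
  have hone : ∀ j ∈ Finset.range (k / 2), g (2 * j) + g (2 * j + 1) = 1 := by
    intro j hj
    have hjlt : j < k / 2 := Finset.mem_range.mp hj
    have h2j : 2 * j < k := by omega
    have h2j1 : 2 * j + 1 < k := by omega
    have e1 : g (2 * j) = if s ⟨2 * j, h2j⟩ + s ⟨2 * j + 1, h2j1⟩ ≠ 0 then 1 else 0 := by
      simp [hg, h2j, shat, Nat.mul_mod_right, h2j1]
    have e2 : g (2 * j + 1) = if s ⟨2 * j, h2j⟩ - s ⟨2 * j + 1, h2j1⟩ ≠ 0 then 1 else 0 := by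
      have hm : (2 * j + 1) % 2 = 1 := by omega
      simp [hg, h2j1, shat, hm]
    rw [e1, e2]
    exact pair_sum _ _ (hsnz _) (hsnz _)
  rw [Finset.sum_congr rfl hone]
  simp
end

section
/- Let m be a positive integer, let H_U ∈ F_3^{r_U×m} and H_V ∈ F_3^{r_V×m}, let a, b, c, d ∈ F_3^m with diagonal matrices A = Diag(a), B = Diag(b), C = Diag(c), D = Diag(d) satisfying a_i·d_i − b_i·c_i = 1 for all 0 ≤ i < m, and let H_sk ∈ F_3^{(r_U+r_V)×2m} be the block matrix with blocks (H_U·D, −H_U·B; −H_V·C, H_V·A). For e_U, e_V ∈ F_3^m set e' := (e_U·A + e_V·B) ∥ (e_U·C + e_V·D) ∈ F_3^{2m}. Then for any h_U ∈ F_3^{r_U} and h_V ∈ F_3^{r_V}, one has H_sk·e'ᵀ = (h_U ∥ h_V)ᵀ if and only if e_U·H_Uᵀ = h_U and e_V·H_Vᵀ = h_V. -/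
open Matrix

theorem stmt8 (m rU rV : ℕ) (hm : 0 < m)
    (HU : Matrix (Fin rU) (Fin m) (ZMod 3)) (HV : Matrix (Fin rV) (Fin m) (ZMod 3))
    (a b c d : Fin m → ZMod 3)
    (hdet : ∀ i, a i * d i - b i * c i = 1)
    (eU eV : Fin m → ZMod 3) (hU : Fin rU → ZMod 3) (hV : Fin rV → ZMod 3) :
    (Matrix.fromBlocks
        (HU * Matrix.diagonal d) (-(HU * Matrix.diagonal b))
        (-(HV * Matrix.diagonal c)) (HV * Matrix.diagonal a)) *ᵥ
      Sum.elim (eU ᵥ* Matrix.diagonal a + eV ᵥ* Matrix.diagonal b)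
               (eU ᵥ* Matrix.diagonal c + eV ᵥ* Matrix.diagonal d)
      = Sum.elim hU hV
    ↔ (eU ᵥ* HUᵀ = hU ∧ eV ᵥ* HVᵀ = hV) := by
  have key1 : Matrix.diagonal d *ᵥ (eU ᵥ* Matrix.diagonal a + eV ᵥ* Matrix.diagonal b)
      - Matrix.diagonal b *ᵥ (eU ᵥ* Matrix.diagonal c + eV ᵥ* Matrix.diagonal d) = eU := by
    funext i
    simp only [Pi.sub_apply, mulVec_diagonal, Pi.add_apply, vecMul_diagonal]
    linear_combination eU i * hdet i
  have key2 : Matrix.diagonal a *ᵥ (eU ᵥ* Matrix.diagonal c + eV ᵥ* Matrix.diagonal d)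
      - Matrix.diagonal c *ᵥ (eU ᵥ* Matrix.diagonal a + eV ᵥ* Matrix.diagonal b) = eV := by
    funext i
    simp only [Pi.sub_apply, mulVec_diagonal, Pi.add_apply, vecMul_diagonal]
    linear_combination eV i * hdet i
  rw [fromBlocks_mulVec]
  simp only [neg_mulVec, ← mulVec_mulVec, ← sub_eq_add_neg, neg_add_eq_sub,
    ← mulVec_sub, Sum.elim_comp_inl, Sum.elim_comp_inr, key1, key2, vecMul_transpose]
  constructor
  · intro h
    exact ⟨funext fun j => congrFun h (Sum.inl j), funext fun j => congrFun h (Sum.inr j)⟩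
  · rintro ⟨h1, h2⟩
    rw [h1, h2]
end

section
/- Encode each element a of F_3 as a pair of bits (a_h, a_l) ∈ {0,1}^2 by 0 ↔ (0,0), 1 ↔ (0,1), 2 ↔ (1,1). Then for all a, b ∈ F_3, the encoding of a + b (sum in F_3) is given by ((a+b)_h, (a+b)_l) = ((a_l ⊕ b_h) & (a_h ⊕ b_l), (a_l ⊕ b_l) | ((a_h ⊕ b_l) ⊕ b_h)), where ⊕, &, | denote XOR, AND, OR on bits. -/
/-- The Type-2 bit encoding of `F_3`: `0 ↔ (0,0)`, `1 ↔ (0,1)`, `2 ↔ (1,1)`,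
where the first component is the high bit and the second the low bit. -/
def enc (a : ZMod 3) : Bool × Bool :=
  if a = 0 then (false, false) else if a = 1 then (false, true) else (true, true)

theorem stmt9 (a b : ZMod 3) :
    enc (a + b) =
      (Bool.xor (enc a).2 (enc b).1 && Bool.xor (enc a).1 (enc b).2,
       Bool.xor (enc a).2 (enc b).2 || Bool.xor (Bool.xor (enc a).1 (enc b).2) (enc b).1) := by
  revert a b; decide
end
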